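/- arXiv:0910.1389 — 2 statements merged into one kernel-verified Lean document; each statement's English description precedes it below -/
import Mathlib

section
/- Let $v = (v_j)_{j \in \mathbb{Z}\setminus\{0\}}$ be a square-summable complex sequence with $v_{-j} = \overline{v_j}$ for all $j$. For each nonzero integer $k$, the resonant sum $\sum^{\mathrm{res}} v_{k_1} v_{k_2} v_{k_3} / k_1$, taken over all triples $(k_1,k_2,k_3)$ of nonzero integers with $k_1+k_2+k_3 = k$ and $(k_1+k_2)(k_2+k_3)(k_3+k_1) = 0$, equals $\frac{v_k}{k}\left(\sum_{j \in \mathbb{Z}\setminus\{0\}} |v_j|^2 - |v_k|^2\right)$. -/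
open Complex

/-!
Off the coordinate axes, where the summand vanishes because `v 0 = 0`, the resonant triples are
the union of the three lines `k₁ + k₂ = 0`, `k₂ + k₃ = 0`, `k₃ + k₁ = 0` of the plane
`k₁ + k₂ + k₃ = k`. These lines meet pairwise in `(k, -k, k)`, `(k, k, -k)`, `(-k, k, k)` and have
no common point, so by inclusion–exclusion the sum is three line sums minus three point values.
On the lines `k₁ + k₂ = 0` and `k₃ + k₁ = 0` the summand is `v_k |v_j|² / j`, odd in `j`, so these
sums vanish; the line `k₂ + k₃ = 0` gives `(v_k / k) ∑ |v_j|²`, and the three points together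
give `|v_k|² v_k / k`.
-/

open Set Function

theorem Set.indicator_union_union_of_inter_eq_empty {α M : Type*} [AddCommGroup M]
    {s t u : Set α} (h : s ∩ t ∩ u = ∅) (f : α → M) :
    (s ∪ t ∪ u).indicator f = s.indicator f + t.indicator f + u.indicator f
      - (s ∩ t).indicator f - (t ∩ u).indicator f - (s ∩ u).indicator f := by
  ext x
  have hx := eq_empty_iff_forall_notMem.mp h x
  by_cases hs : x ∈ s <;> by_cases ht : x ∈ t <;> by_cases hu : x ∈ u <;>
    simp [hs, ht, hu, indicator_of_mem, indicator_of_notMem] at hx ⊢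

theorem Function.Injective.hasSum_indicator_range_iff {α β M : Type*} [AddCommMonoid M]
    [TopologicalSpace M] {e : α → β} (he : Injective e) {f : β → M} {a : M} :
    HasSum ((range e).indicator f) a ↔ HasSum (f ∘ e) a :=
  hasSum_subtype_iff_indicator.symm.trans he.hasSum_range_iff

theorem hasSum_indicator_singleton {β M : Type*} [AddCommMonoid M] [TopologicalSpace M]
    (f : β → M) (b : β) : HasSum (({b} : Set β).indicator f) (f b) := by
  simpa using hasSum_single (f := ({b} : Set β).indicator f) b
    fun _ hb ↦ indicator_of_notMem (mem_singleton_iff.not.mpr hb) f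

theorem Summable.hasSum_zero_of_odd {M : Type*} [AddCommGroup M] [TopologicalSpace M]
    [IsTopologicalAddGroup M] [T2Space M] [IsAddTorsionFree M] {f : ℤ → M} (hf : Summable f)
    (hodd : ∀ j, f (-j) = -f j) : HasSum f 0 := by
  obtain ⟨a, ha⟩ := hf
  have hneg : HasSum (fun j ↦ -f j) a := by
    simpa [Function.comp_def, hodd] using (Equiv.neg ℤ).hasSum_iff.mpr ha
  rwa [self_eq_neg.mp (hneg.unique ha.neg)] at ha

theorem summable_div_intCast {w : ℤ → ℂ} (hw : Summable fun j ↦ ‖w j‖) :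
    Summable fun j : ℤ ↦ w j / j := by
  refine .of_norm_bounded hw fun j ↦ ?_
  rcases eq_or_ne j 0 with rfl | hj
  · simp
  rw [norm_div]
  refine div_le_self (norm_nonneg _) ?_
  rw [norm_intCast]
  exact_mod_cast Int.one_le_abs hj

namespace Resonance

def line₁₂ (k : ℤ) : Set (ℤ × ℤ × ℤ) := range fun j ↦ (j, -j, k)

def line₂₃ (k : ℤ) : Set (ℤ × ℤ × ℤ) := range fun j ↦ (k, j, -j)

def line₃₁ (k : ℤ) : Set (ℤ × ℤ × ℤ) := range fun j ↦ (j, k, -j)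

theorem ite_eq_indicator_union {M : Type*} [Zero M] {k : ℤ} {f : ℤ × ℤ × ℤ → M}
    (hf : ∀ p : ℤ × ℤ × ℤ, p.1 = 0 ∨ p.2.1 = 0 ∨ p.2.2 = 0 → f p = 0) (p : ℤ × ℤ × ℤ) :
    (if p.1 + p.2.1 + p.2.2 = k ∧ p.1 ≠ 0 ∧ p.2.1 ≠ 0 ∧ p.2.2 ≠ 0 ∧
        (p.1 + p.2.1) * (p.2.1 + p.2.2) * (p.2.2 + p.1) = 0 then f p else 0) =
      (line₁₂ k ∪ line₂₃ k ∪ line₃₁ k).indicator f p := by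
  classical
  obtain ⟨a, b, c⟩ := p
  by_cases h0 : a = 0 ∨ b = 0 ∨ c = 0
  · simp [indicator_apply, hf (a, b, c) h0]
  rw [indicator_apply]
  refine if_congr ?_ rfl rfl
  simp only [line₁₂, line₂₃, line₃₁, mem_union, mem_range, Prod.mk.injEq, mul_eq_zero,
    exists_and_left, exists_eq_left]
  omega

theorem line₁₂_inter_line₂₃ (k : ℤ) : line₁₂ k ∩ line₂₃ k = {(k, -k, k)} := by
  ext ⟨a, b, c⟩
  simp only [line₁₂, line₂₃, mem_inter_iff, mem_range, mem_singleton_iff, Prod.mk.injEq,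
    exists_and_left, exists_eq_left]
  omega

theorem line₂₃_inter_line₃₁ (k : ℤ) : line₂₃ k ∩ line₃₁ k = {(k, k, -k)} := by
  ext ⟨a, b, c⟩
  simp only [line₂₃, line₃₁, mem_inter_iff, mem_range, mem_singleton_iff, Prod.mk.injEq,
    exists_and_left, exists_eq_left]
  omega

theorem line₁₂_inter_line₃₁ (k : ℤ) : line₁₂ k ∩ line₃₁ k = {(-k, k, k)} := by
  ext ⟨a, b, c⟩
  simp only [line₁₂, line₃₁, mem_inter_iff, mem_range, mem_singleton_iff, Prod.mk.injEq,
    exists_eq_left]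
  omega

theorem line₁₂_inter_line₂₃_inter_line₃₁ {k : ℤ} (hk : k ≠ 0) :
    line₁₂ k ∩ line₂₃ k ∩ line₃₁ k = ∅ := by
  rw [line₁₂_inter_line₂₃, singleton_inter_eq_empty]
  simp only [line₃₁, mem_range, Prod.mk.injEq, not_exists]
  omega

noncomputable def resonantTerm (v : ℤ → ℂ) (p : ℤ × ℤ × ℤ) : ℂ :=
  v p.1 * v p.2.1 * v p.2.2 / p.1

variable {v : ℤ → ℂ}

theorem mul_apply_neg_eq_norm_sq (hconj : ∀ j, v (-j) = starRingEnd ℂ (v j)) (j : ℤ) :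
    v j * v (-j) = ((‖v j‖ ^ 2 : ℝ) : ℂ) := by
  rw [hconj, mul_conj', ofReal_pow]

theorem hasSum_mul_apply_neg_div_zero (hconj : ∀ j, v (-j) = starRingEnd ℂ (v j))
    (hsq : Summable fun j : ℤ ↦ ‖v j‖ ^ 2) : HasSum (fun j : ℤ ↦ v j * v (-j) / j) 0 := by
  refine Summable.hasSum_zero_of_odd (summable_div_intCast ?_) fun j ↦ ?_
  · simpa [mul_apply_neg_eq_norm_sq hconj] using hsq
  · rw [neg_neg, Int.cast_neg]
    ring

theorem hasSum_indicator_line₁₂ (hconj : ∀ j, v (-j) = starRingEnd ℂ (v j))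
    (hsq : Summable fun j : ℤ ↦ ‖v j‖ ^ 2) (k : ℤ) :
    HasSum ((line₁₂ k).indicator (resonantTerm v)) 0 := by
  refine (Injective.hasSum_indicator_range_iff fun i j h ↦ congrArg Prod.fst h).mpr ?_
  have hcomp : resonantTerm v ∘ (fun j ↦ (j, -j, k)) = fun j ↦ v j * v (-j) / j * v k := by
    ext j
    simp only [comp_apply, resonantTerm]
    ring
  rw [hcomp, ← zero_mul (v k)]
  exact (hasSum_mul_apply_neg_div_zero hconj hsq).mul_right (v k)

theorem hasSum_indicator_line₃₁ (hconj : ∀ j, v (-j) = starRingEnd ℂ (v j))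
    (hsq : Summable fun j : ℤ ↦ ‖v j‖ ^ 2) (k : ℤ) :
    HasSum ((line₃₁ k).indicator (resonantTerm v)) 0 := by
  refine (Injective.hasSum_indicator_range_iff fun i j h ↦ congrArg Prod.fst h).mpr ?_
  have hcomp : resonantTerm v ∘ (fun j ↦ (j, k, -j)) = fun j ↦ v j * v (-j) / j * v k := by
    ext j
    simp only [comp_apply, resonantTerm]
    ring
  rw [hcomp, ← zero_mul (v k)]
  exact (hasSum_mul_apply_neg_div_zero hconj hsq).mul_right (v k)

theorem hasSum_indicator_line₂₃ (hconj : ∀ j, v (-j) = starRingEnd ℂ (v j))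
    (hsq : Summable fun j : ℤ ↦ ‖v j‖ ^ 2) (k : ℤ) :
    HasSum ((line₂₃ k).indicator (resonantTerm v)) (v k / k * ((∑' j, ‖v j‖ ^ 2 : ℝ) : ℂ)) := by
  refine (Injective.hasSum_indicator_range_iff fun i j h ↦ congrArg (·.2.1) h).mpr ?_
  have hcomp : resonantTerm v ∘ (fun j ↦ (k, j, -j)) =
      fun j ↦ v k / k * ((‖v j‖ ^ 2 : ℝ) : ℂ) := by
    ext j
    simp only [comp_apply, resonantTerm, mul_assoc, mul_apply_neg_eq_norm_sq hconj]
    ring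
  rw [hcomp]
  exact (hasSum_ofReal.mpr hsq.hasSum).mul_left _

end Resonance

open Resonance

theorem resonant_sum_eval (v : ℤ → ℂ) (hv0 : v 0 = 0)
    (hsq : Summable fun j : ℤ => ‖v j‖ ^ 2)
    (hconj : ∀ j : ℤ, v (-j) = starRingEnd ℂ (v j))
    (k : ℤ) (hk : k ≠ 0) :
    (∑' p : ℤ × ℤ × ℤ,
      if p.1 + p.2.1 + p.2.2 = k ∧ p.1 ≠ 0 ∧ p.2.1 ≠ 0 ∧ p.2.2 ≠ 0 ∧
          (p.1 + p.2.1) * (p.2.1 + p.2.2) * (p.2.2 + p.1) = 0 then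
        v p.1 * v p.2.1 * v p.2.2 / (p.1 : ℂ)
      else 0) =
      v k / (k : ℂ) * (((∑' j : ℤ, ‖v j‖ ^ 2) - ‖v k‖ ^ 2 : ℝ) : ℂ) := by
  have hT0 : ∀ p : ℤ × ℤ × ℤ, p.1 = 0 ∨ p.2.1 = 0 ∨ p.2.2 = 0 → resonantTerm v p = 0 := by
    rintro ⟨a, b, c⟩ (rfl | rfl | rfl) <;> simp [resonantTerm, hv0]
  have hsum : HasSum ((line₁₂ k ∪ line₂₃ k ∪ line₃₁ k).indicator (resonantTerm v))
      (0 + v k / k * ((∑' j, ‖v j‖ ^ 2 : ℝ) : ℂ) + 0 - resonantTerm v (k, -k, k)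
        - resonantTerm v (k, k, -k) - resonantTerm v (-k, k, k)) := by
    rw [indicator_union_union_of_inter_eq_empty (line₁₂_inter_line₂₃_inter_line₃₁ hk),
      line₁₂_inter_line₂₃, line₂₃_inter_line₃₁, line₁₂_inter_line₃₁]
    exact ((((hasSum_indicator_line₁₂ hconj hsq k).add (hasSum_indicator_line₂₃ hconj hsq k)).add
      (hasSum_indicator_line₃₁ hconj hsq k)).sub (hasSum_indicator_singleton _ _)).sub
      (hasSum_indicator_singleton _ _) |>.sub (hasSum_indicator_singleton _ _)
  refine (tsum_congr (ite_eq_indicator_union hT0)).trans (hsum.tsum_eq.trans ?_)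
  have hvk := mul_apply_neg_eq_norm_sq hconj k
  push_cast at hvk ⊢
  simp only [resonantTerm, Int.cast_neg]
  linear_combination (-v k / k) * hvk
end

section
/- For $\theta > 3/2$ the bilinear operator $B_1$ defined on pairs of sequences $u, v \in \ell^2(\mathbb{Z}\setminus\{0\})$ by $B_1(u,v)_k = \frac{1}{2} i k \sum_{k_1+k_2=k} e^{i 3 k k_1 k_2 t} u_{k_1} v_{k_2}$ (sum over nonzero $k_1, k_2$) satisfies $\|B_1(u,v)\|_{\dot H^{-\theta}} \leq c_1(\theta) \|u\|_{\dot H^0} \|v\|_{\dot H^0}$, where $c_1(\theta) = \frac{1}{2}\left(\sum_{k \neq 0} |k|^{-2(\theta-1)}\right)^{1/2}$. -/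
open Complex

/-- Homogeneous Sobolev norm of a sequence indexed by `ℤ` (modes; mode `0` is assumed zero). -/
noncomputable def hnorm (s : ℝ) (u : ℤ → ℂ) : ℝ :=
  (∑' k : ℤ, |(k : ℝ)| ^ (2 * s) * ‖u k‖ ^ 2) ^ ((1 : ℝ) / 2)

/-- The bilinear operator `B₁` of the KdV equation in oscillating variables. -/
noncomputable def B1 (t : ℝ) (u v : ℤ → ℂ) (k : ℤ) : ℂ :=
  (1 / 2) * Complex.I * (k : ℂ) *
    ∑' k1 : ℤ, Complex.exp (Complex.I * (3 * (k : ℂ) * (k1 : ℂ) * ((k : ℂ) - (k1 : ℂ)) * (t : ℂ)))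
      * u k1 * v (k - k1)

/-!
The phases `exp (3 i k k₁ k₂ t)` are unimodular, so by Cauchy–Schwarz and translation invariance
of the `ℓ²` norm the `k`-th coefficient of `B₁(u, v)` is at most `|k| / 2 · ‖u‖ ‖v‖`. Weighting
its square by `|k|^(-2θ)` leaves `‖u‖² ‖v‖² / 4 · ∑ |k|^(-2(θ - 1))`, a series that converges
because `2(θ - 1) > 1`.
-/

open Real

theorem summable_and_tsum_mul_comp_sub_le {G : Type*} [AddGroup G] {f g : G → ℝ}
    (hf : ∀ j, 0 ≤ f j) (hg : ∀ j, 0 ≤ g j)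
    (hf2 : Summable fun j => f j ^ 2) (hg2 : Summable fun j => g j ^ 2) (k : G) :
    (Summable fun j => f j * g (k - j)) ∧
      ∑' j, f j * g (k - j) ≤ (∑' j, f j ^ 2) ^ ((1 : ℝ) / 2) * (∑' j, g j ^ 2) ^ ((1 : ℝ) / 2) := by
  have hg2' : Summable fun j => g (k - j) ^ 2 :=
    (Equiv.subLeft k).summable_iff (f := fun j => g j ^ 2) |>.mpr hg2
  have htranslate : ∑' j, g (k - j) ^ 2 = ∑' j, g j ^ 2 :=
    (Equiv.subLeft k).tsum_eq (fun j => g j ^ 2)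
  have h := summable_and_inner_le_Lp_mul_Lq_tsum_of_nonneg .two_two hf (fun j => hg (k - j))
    (by simpa only [rpow_two] using hf2) (by simpa only [rpow_two] using hg2')
  simp only [rpow_two] at h
  rwa [htranslate] at h

theorem hnorm_zero (u : ℤ → ℂ) : hnorm 0 u = (∑' k : ℤ, ‖u k‖ ^ 2) ^ ((1 : ℝ) / 2) := by
  simp [hnorm]

theorem norm_B1_le (t : ℝ) {u v : ℤ → ℂ}
    (hu : Summable fun k : ℤ => ‖u k‖ ^ 2) (hv : Summable fun k : ℤ => ‖v k‖ ^ 2) (k : ℤ) :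
    ‖B1 t u v k‖ ≤ 1 / 2 * hnorm 0 u * hnorm 0 v * |(k : ℝ)| := by
  have hterm : ∀ j : ℤ,
      ‖exp (I * (3 * (k : ℂ) * (j : ℂ) * ((k : ℂ) - (j : ℂ)) * (t : ℂ))) * u j * v (k - j)‖ =
        ‖u j‖ * ‖v (k - j)‖ := fun j => by
    have := norm_exp_I_mul_ofReal (3 * k * j * (k - j) * t)
    push_cast at this
    rw [norm_mul, norm_mul, this, one_mul]
  obtain ⟨hsum, hle⟩ := summable_and_tsum_mul_comp_sub_le (fun j => norm_nonneg (u j))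
    (fun j => norm_nonneg (v j)) hu hv k
  rw [hnorm_zero, hnorm_zero]
  calc ‖B1 t u v k‖
      = 1 / 2 * |(k : ℝ)| * ‖∑' j : ℤ,
          exp (I * (3 * (k : ℂ) * (j : ℂ) * ((k : ℂ) - (j : ℂ)) * (t : ℂ))) * u j * v (k - j)‖ := by
        simp [B1]
    _ ≤ 1 / 2 * |(k : ℝ)| * ∑' j : ℤ, ‖u j‖ * ‖v (k - j)‖ := by
        gcongr
        exact (norm_tsum_le_tsum_norm (hsum.congr fun j => (hterm j).symm)).trans_eq
          (tsum_congr hterm)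
    _ ≤ 1 / 2 * |(k : ℝ)| * ((∑' j : ℤ, ‖u j‖ ^ 2) ^ ((1 : ℝ) / 2) *
          (∑' j : ℤ, ‖v j‖ ^ 2) ^ ((1 : ℝ) / 2)) := by gcongr
    _ = _ := by ring

theorem hnorm_le_of_norm_le_mul_abs {s M : ℝ} {w : ℤ → ℂ} (hw : ∀ k, ‖w k‖ ≤ M * |(k : ℝ)|)
    (hsum : Summable fun k : ℤ => |(k : ℝ)| ^ (2 * s + 2)) :
    hnorm s w ≤ M * (∑' k : ℤ, |(k : ℝ)| ^ (2 * s + 2)) ^ ((1 : ℝ) / 2) := by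
  have hM : 0 ≤ M := by simpa using (norm_nonneg _).trans (hw 1)
  have hterm : ∀ k : ℤ, |(k : ℝ)| ^ (2 * s) * ‖w k‖ ^ 2 ≤ M ^ 2 * |(k : ℝ)| ^ (2 * s + 2) :=
    fun k => calc
      |(k : ℝ)| ^ (2 * s) * ‖w k‖ ^ 2 ≤ |(k : ℝ)| ^ (2 * s) * (M * |(k : ℝ)|) ^ 2 := by
          gcongr
          exact hw k
      _ = M ^ 2 * (|(k : ℝ)| ^ (2 * s) * |(k : ℝ)| ^ (2 : ℝ)) := by rw [rpow_two]; ring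
      _ ≤ M ^ 2 * |(k : ℝ)| ^ (2 * s + 2) := by gcongr; exact le_rpow_add (abs_nonneg _) _ _
  have hnonneg : ∀ k : ℤ, 0 ≤ |(k : ℝ)| ^ (2 * s) * ‖w k‖ ^ 2 := fun k => by positivity
  calc hnorm s w ≤ (∑' k : ℤ, M ^ 2 * |(k : ℝ)| ^ (2 * s + 2)) ^ ((1 : ℝ) / 2) :=
        rpow_le_rpow (tsum_nonneg hnonneg)
          (Summable.tsum_le_tsum hterm (.of_nonneg_of_le hnonneg hterm (hsum.mul_left _))
            (hsum.mul_left _)) (by norm_num)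
    _ = M * (∑' k : ℤ, |(k : ℝ)| ^ (2 * s + 2)) ^ ((1 : ℝ) / 2) := by
        rw [tsum_mul_left, mul_rpow (sq_nonneg M) (tsum_nonneg fun k => by positivity),
          ← sqrt_eq_rpow (M ^ 2), sqrt_sq hM]

theorem B1_bound_general (θ : ℝ) (hθ : 3 / 2 < θ) (t : ℝ) (u v : ℤ → ℂ)
    (hu : Summable fun k : ℤ => ‖u k‖ ^ 2) (hv : Summable fun k : ℤ => ‖v k‖ ^ 2) :
    hnorm (-θ) (B1 t u v) ≤
      (1 / 2) * (∑' k : ℤ, |(k : ℝ)| ^ (-2 * (θ - 1))) ^ ((1 : ℝ) / 2) *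
        hnorm 0 u * hnorm 0 v := by
  have hexp : 2 * -θ + 2 = -(2 * (θ - 1)) := by ring
  have hsum : Summable fun k : ℤ => |(k : ℝ)| ^ (2 * -θ + 2) := by
    rw [hexp]
    exact summable_abs_int_rpow (by linarith)
  calc hnorm (-θ) (B1 t u v)
      ≤ 1 / 2 * hnorm 0 u * hnorm 0 v * (∑' k : ℤ, |(k : ℝ)| ^ (2 * -θ + 2)) ^ ((1 : ℝ) / 2) :=
        hnorm_le_of_norm_le_mul_abs (norm_B1_le t hu hv) hsum
    _ = _ := by rw [hexp, ← neg_mul]; ring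

theorem B1_bound (θ : ℝ) (hθ : 3 / 2 < θ) (t : ℝ) (u v : ℤ → ℂ)
    (hu0 : u 0 = 0) (hv0 : v 0 = 0)
    (hu : Summable fun k : ℤ => ‖u k‖ ^ 2) (hv : Summable fun k : ℤ => ‖v k‖ ^ 2) :
    hnorm (-θ) (B1 t u v) ≤
      (1 / 2) * (∑' k : ℤ, |(k : ℝ)| ^ (-2 * (θ - 1))) ^ ((1 : ℝ) / 2) *
        hnorm 0 u * hnorm 0 v :=
  B1_bound_general θ hθ t u v hu hv
end
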